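/- arXiv:2412.08427 — 2 statements merged into one kernel-verified Lean document; each statement's English description precedes it below -/
import Mathlib

section
/- Let d ≥ 1 and let γ : ℝ → ℝ be continuous on [0,∞) with 0 < γ_min ≤ γ(t) ≤ γ_max for all t ≥ 0, let Γ(t) := ∫₀^t γ(s) ds, and assume the map t ↦ Γ(t²) is convex on [0,∞). Then the vector field β(z) := γ(|z|²/2) z is monotone on ℝ^d: for all z, z' ∈ ℝ^d, ⟨γ(|z|²/2) z − γ(|z'|²/2) z', z − z'⟩ ≥ 0. Moreover, the inequality is strict when z' = 0 and z ≠ 0, in which case the left-hand side equals γ(|z|²/2)|z|² > 0. -/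
open Filter MeasureTheory Topology Real Set
open scoped RealInnerProductSpace

lemma mono_aux (γ : ℝ → ℝ) (Γ : ℝ → ℝ)
    (hγcont : ContinuousOn γ (Set.Ici (0 : ℝ)))
    (hΓ : ∀ t : ℝ, Γ t = ∫ s in (0:ℝ)..t, γ s)
    (hconv : ConvexOn ℝ (Set.Ici (0 : ℝ)) (fun t : ℝ => Γ (t ^ 2)))
    {a b : ℝ} (ha : 0 ≤ a) (hab : a ≤ b) :
    a * γ (a ^ 2) ≤ b * γ (b ^ 2) := by
  have hΓd : ∀ x : ℝ, 0 ≤ x → HasDerivWithinAt Γ (γ x) (Set.Ici 0) x := by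
    intro x hx
    have hint : IntervalIntegrable γ volume 0 x := by
      apply ContinuousOn.intervalIntegrable
      apply hγcont.mono
      rw [Set.uIcc_of_le hx]
      exact Set.Icc_subset_Ici_self
    have hD : HasDerivWithinAt (fun u => ∫ s in (0:ℝ)..u, γ s) (γ x) (Set.Ici 0) x := by
      rcases eq_or_lt_of_le hx with rfl | hx'
      · refine intervalIntegral.integral_hasDerivWithinAt_right hint ?_ ?_
        · exact (hγcont.mono Set.Ioi_subset_Ici_self).stronglyMeasurableAtFilter_nhdsWithin
            measurableSet_Ioi 0
        · exact (hγcont 0 Set.self_mem_Ici).mono Set.Ioi_subset_Ici_self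
      · exact (intervalIntegral.integral_hasDerivAt_right hint
          (ContinuousOn.stronglyMeasurableAtFilter isOpen_Ioi
            (hγcont.mono Set.Ioi_subset_Ici_self) x hx')
          (hγcont.continuousAt (Ici_mem_nhds hx'))).hasDerivWithinAt
    exact hD.congr (fun y _ => (hΓ y)) (hΓ x)
  have hΦd : ∀ t : ℝ, 0 ≤ t →
      HasDerivWithinAt (fun t : ℝ => Γ (t ^ 2)) (γ (t ^ 2) * (2 * t)) (Set.Ici 0) t := by
    intro t ht
    have hsq : HasDerivWithinAt (fun y : ℝ => y ^ 2) (2 * t) (Set.Ici 0) t := by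
      simpa using (hasDerivAt_pow 2 t).hasDerivWithinAt
    have := HasDerivWithinAt.comp_of_eq (x := t) (hΓd (t ^ 2) (sq_nonneg t)) hsq
      (fun y _ => sq_nonneg y) rfl
    simpa [Function.comp_def] using this
  rcases eq_or_lt_of_le hab with rfl | hab'
  · exact le_rfl
  have h1 := hconv.le_slope_of_hasDerivWithinAt ha (ha.trans hab) hab' (hΦd a ha)
  have h2 := hconv.slope_le_of_hasDerivWithinAt ha (ha.trans hab) hab' (hΦd b (ha.trans hab))
  nlinarith [h1.trans h2]

/-- The vector field `β(z) = γ(|z|²/2) z` is monotone on `ℝ^d`; moreover the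
monotonicity inequality is strict when `z' = 0` and `z ≠ 0`, in which case the
left-hand side equals `γ(|z|²/2)|z|² > 0`. -/
theorem stmt_3 (d : ℕ) (hd : 1 ≤ d) (γ : ℝ → ℝ) (γmin γmax : ℝ)
    (hγcont : ContinuousOn γ (Set.Ici (0 : ℝ)))
    (hγmin : 0 < γmin)
    (hγbound : ∀ t : ℝ, 0 ≤ t → γmin ≤ γ t ∧ γ t ≤ γmax)
    (Γ : ℝ → ℝ) (hΓ : ∀ t : ℝ, Γ t = ∫ s in (0:ℝ)..t, γ s)
    (hconv : ConvexOn ℝ (Set.Ici (0 : ℝ)) (fun t : ℝ => Γ (t ^ 2)))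
    (z z' : EuclideanSpace ℝ (Fin d)) :
    0 ≤ ⟪γ (‖z‖ ^ 2 / 2) • z - γ (‖z'‖ ^ 2 / 2) • z', z - z'⟫ ∧
    (z' = 0 → z ≠ 0 →
      ⟪γ (‖z‖ ^ 2 / 2) • z - γ (‖z'‖ ^ 2 / 2) • z', z - z'⟫
          = γ (‖z‖ ^ 2 / 2) * ‖z‖ ^ 2 ∧
      0 < ⟪γ (‖z‖ ^ 2 / 2) • z - γ (‖z'‖ ^ 2 / 2) • z', z - z'⟫) := by
  have hs2 : (0:ℝ) < Real.sqrt 2 := by positivity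
  have hsq2 : (Real.sqrt 2) ^ 2 = 2 := Real.sq_sqrt (by norm_num)
  have hmono : ∀ u v : ℝ, 0 ≤ u → u ≤ v → u * γ (u ^ 2 / 2) ≤ v * γ (v ^ 2 / 2) := by
    intro u v hu huv
    have e : ∀ w : ℝ, (w / Real.sqrt 2) ^ 2 = w ^ 2 / 2 := by
      intro w; rw [div_pow, hsq2]
    have h := mono_aux γ Γ hγcont hΓ hconv (a := u / Real.sqrt 2) (b := v / Real.sqrt 2)
      (by positivity) (by gcongr)
    rw [e, e, div_mul_eq_mul_div, div_mul_eq_mul_div] at h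
    exact (div_le_div_iff_of_pos_right hs2).mp h
  have hgz : γmin ≤ γ (‖z‖ ^ 2 / 2) := (hγbound _ (by positivity)).1
  have hgz' : γmin ≤ γ (‖z'‖ ^ 2 / 2) := (hγbound _ (by positivity)).1
  have expand : ⟪γ (‖z‖ ^ 2 / 2) • z - γ (‖z'‖ ^ 2 / 2) • z', z - z'⟫
      = γ (‖z‖ ^ 2 / 2) * ‖z‖ ^ 2 + γ (‖z'‖ ^ 2 / 2) * ‖z'‖ ^ 2
        - (γ (‖z‖ ^ 2 / 2) + γ (‖z'‖ ^ 2 / 2)) * ⟪z, z'⟫ := by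
    rw [inner_sub_left, inner_sub_right, inner_sub_right, real_inner_smul_left,
      real_inner_smul_left, real_inner_smul_left, real_inner_smul_left,
      real_inner_self_eq_norm_sq, real_inner_self_eq_norm_sq, real_inner_comm z' z]
    ring
  have hcs : ⟪z, z'⟫ ≤ ‖z‖ * ‖z'‖ := real_inner_le_norm z z'
  have hsum : (0:ℝ) ≤ γ (‖z‖ ^ 2 / 2) + γ (‖z'‖ ^ 2 / 2) := by linarith
  have f1 : (γ (‖z‖ ^ 2 / 2) + γ (‖z'‖ ^ 2 / 2)) * ⟪z, z'⟫
      ≤ (γ (‖z‖ ^ 2 / 2) + γ (‖z'‖ ^ 2 / 2)) * (‖z‖ * ‖z'‖) :=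
    mul_le_mul_of_nonneg_left hcs hsum
  have hnonneg : 0 ≤ ⟪γ (‖z‖ ^ 2 / 2) • z - γ (‖z'‖ ^ 2 / 2) • z', z - z'⟫ := by
    rw [expand]
    rcases le_total ‖z'‖ ‖z‖ with hle | hle
    · have hm := hmono _ _ (norm_nonneg z') hle
      have f2 : 0 ≤ (‖z‖ - ‖z'‖) * (‖z‖ * γ (‖z‖ ^ 2 / 2) - ‖z'‖ * γ (‖z'‖ ^ 2 / 2)) :=
        mul_nonneg (sub_nonneg.2 hle) (sub_nonneg.2 hm)
      nlinarith [f1, f2]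
    · have hm := hmono _ _ (norm_nonneg z) hle
      have f2 : 0 ≤ (‖z'‖ - ‖z‖) * (‖z'‖ * γ (‖z'‖ ^ 2 / 2) - ‖z‖ * γ (‖z‖ ^ 2 / 2)) :=
        mul_nonneg (sub_nonneg.2 hle) (sub_nonneg.2 hm)
      nlinarith [f1, f2]
  refine ⟨hnonneg, ?_⟩
  rintro rfl hz
  have heq : ⟪γ (‖z‖ ^ 2 / 2) • z - γ (‖(0 : EuclideanSpace ℝ (Fin d))‖ ^ 2 / 2) • (0 : EuclideanSpace ℝ (Fin d)),
      z - 0⟫ = γ (‖z‖ ^ 2 / 2) * ‖z‖ ^ 2 := by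
    rw [expand]; simp
  refine ⟨heq, ?_⟩
  rw [heq]
  have hzpos : 0 < ‖z‖ := norm_pos_iff.mpr hz
  have : 0 < γ (‖z‖ ^ 2 / 2) := lt_of_lt_of_le hγmin hgz
  positivity
end

section
/- Let (Ω, μ) be a finite measure space, d ≥ 1, and let γ : ℝ → ℝ be continuous on [0,∞) with 0 < γ_min ≤ γ(t) ≤ γ_max for all t ≥ 0 and such that the limit γ(∞) := lim_{τ→∞} γ(τ) exists. Let (g_n) ⊂ L²(μ; ℝ^d) with sup_n ∫_Ω |g_n|² dμ ≤ M < ∞, let (t_n) be positive real numbers with t_n → 0, and let h ∈ L²(μ; ℝ^d). Then ∫_Ω ( γ(|g_n(x)|²/(2 t_n²)) − γ(∞) ) ⟨g_n(x), h(x)⟩ dμ(x) → 0 as n → ∞. -/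
/-!
Fix `ε > 0` and `T` with `|γ τ - γ(∞)| ≤ ε` for `τ ≥ T`. At a point where
`|g_n|² / (2 t_n²) ≥ T` the integrand is at most `ε |g_n| |h| ≤ ε (|g_n|² + |h|²) / 2`; at the
remaining points `|g_n| < t_n √(2T)`, so the integrand is at most `C √(2T) t_n |h|` with `C` a
bound for `|γ - γ(∞)|`. Integrating, the `n`-th term is at most `ε (M + ‖h‖₂²) / 2 + O(t_n)`.
-/

open Filter MeasureTheory Topology Real
open scoped RealInnerProductSpace

theorem tendsto_zero_of_forall_norm_le_mul_add {ι E : Type*} [SeminormedAddCommGroup E]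
    {l : Filter ι} {x : ι → E} {t : ι → ℝ} (K : ℝ) (ht : Tendsto t l (𝓝 0))
    (hx : ∀ ε > 0, ∃ D, ∀ᶠ i in l, ‖x i‖ ≤ ε * K + D * t i) :
    Tendsto x l (𝓝 0) := by
  rw [NormedAddGroup.tendsto_nhds_zero]
  intro δ hδ
  have hK : 0 < |K| + 1 := by positivity
  obtain ⟨D, hD⟩ := hx (δ / (2 * (|K| + 1))) (by positivity)
  have hDt : ∀ᶠ i in l, D * t i < δ / 2 := by
    have : Tendsto (fun i => D * t i) l (𝓝 0) := by simpa using ht.const_mul D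
    exact this.eventually (gt_mem_nhds (by positivity))
  have hεK : δ / (2 * (|K| + 1)) * K < δ / 2 := by
    rw [div_mul_eq_mul_div, div_lt_div_iff₀ (by positivity) two_pos]
    nlinarith [le_abs_self K]
  filter_upwards [hD, hDt] with i hi hi'
  linarith

theorem abs_comp_sq_div_mul_le {φ : ℝ → ℝ} {C ε T s t : ℝ} (hC : ∀ τ, 0 ≤ τ → |φ τ| ≤ C)
    (hT : ∀ τ, T ≤ τ → |φ τ| ≤ ε) (hs : 0 ≤ s) (ht : 0 < t) :
    |φ (s ^ 2 / (2 * t ^ 2))| * s ≤ ε * s + C * √(2 * T) * t := by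
  have hε : 0 ≤ ε := (abs_nonneg _).trans (hT T le_rfl)
  have hC₀ : 0 ≤ C := (abs_nonneg _).trans (hC 0 le_rfl)
  rcases le_or_gt T (s ^ 2 / (2 * t ^ 2)) with hlarge | hsmall
  · have := mul_le_mul_of_nonneg_right (hT _ hlarge) hs
    have : 0 ≤ C * √(2 * T) * t := by positivity
    linarith
  · have hs_le : s ≤ √(2 * T) * t := by
      rw [div_lt_iff₀ (by positivity)] at hsmall
      rw [← sqrt_sq ht.le, ← sqrt_mul' _ (sq_nonneg t)]
      exact (Real.le_sqrt hs (by nlinarith [sq_nonneg s])).2 (by linarith)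
    calc |φ (s ^ 2 / (2 * t ^ 2))| * s ≤ C * (√(2 * T) * t) :=
          mul_le_mul (hC _ (by positivity)) hs_le hs hC₀
      _ ≤ ε * s + C * √(2 * T) * t := by nlinarith [mul_nonneg hε hs]

theorem norm_integral_mul_inner_le {Ω E : Type*} [MeasurableSpace Ω] {μ : Measure Ω}
    [IsFiniteMeasure μ] [NormedAddCommGroup E] [InnerProductSpace ℝ E] {φ : ℝ → ℝ}
    {C ε T t : ℝ} (hC : ∀ τ, 0 ≤ τ → |φ τ| ≤ C) (hT : ∀ τ, T ≤ τ → |φ τ| ≤ ε) (ht : 0 < t)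
    {g h : Ω → E} (hg : MemLp g 2 μ) (hh : MemLp h 2 μ) :
    ‖∫ x, φ (‖g x‖ ^ 2 / (2 * t ^ 2)) * ⟪g x, h x⟫ ∂μ‖ ≤
      ε / 2 * ((∫ x, ‖g x‖ ^ 2 ∂μ) + ∫ x, ‖h x‖ ^ 2 ∂μ) + C * √(2 * T) * t * ∫ x, ‖h x‖ ∂μ := by
  have hε : 0 ≤ ε := (abs_nonneg _).trans (hT T le_rfl)
  have hg2 : Integrable (fun x => ‖g x‖ ^ 2) μ := hg.norm.integrable_sq
  have hh2 : Integrable (fun x => ‖h x‖ ^ 2) μ := hh.norm.integrable_sq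
  have hh1 : Integrable (fun x => ‖h x‖) μ := (hh.integrable one_le_two).norm
  have hsum : Integrable (fun x => ‖g x‖ ^ 2 + ‖h x‖ ^ 2) μ := hg2.add hh2
  have hpointwise : ∀ x, ‖φ (‖g x‖ ^ 2 / (2 * t ^ 2)) * ⟪g x, h x⟫‖ ≤
      ε / 2 * (‖g x‖ ^ 2 + ‖h x‖ ^ 2) + C * √(2 * T) * t * ‖h x‖ := fun x => by
    have hφ := abs_comp_sq_div_mul_le hC hT (norm_nonneg (g x)) ht
    calc ‖φ (‖g x‖ ^ 2 / (2 * t ^ 2)) * ⟪g x, h x⟫‖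
        ≤ |φ (‖g x‖ ^ 2 / (2 * t ^ 2))| * ‖g x‖ * ‖h x‖ := by
          rw [norm_mul, Real.norm_eq_abs, mul_assoc]
          gcongr
          exact norm_inner_le_norm _ _
      _ ≤ (ε * ‖g x‖ + C * √(2 * T) * t) * ‖h x‖ := by gcongr
      _ ≤ ε / 2 * (‖g x‖ ^ 2 + ‖h x‖ ^ 2) + C * √(2 * T) * t * ‖h x‖ := by
          nlinarith [mul_nonneg hε (sq_nonneg (‖g x‖ - ‖h x‖))]
  calc ‖∫ x, φ (‖g x‖ ^ 2 / (2 * t ^ 2)) * ⟪g x, h x⟫ ∂μ‖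
      ≤ ∫ x, ε / 2 * (‖g x‖ ^ 2 + ‖h x‖ ^ 2) + C * √(2 * T) * t * ‖h x‖ ∂μ :=
        norm_integral_le_of_norm_le ((hsum.const_mul _).add (hh1.const_mul _))
          (Eventually.of_forall hpointwise)
    _ = _ := by
        rw [integral_add (hsum.const_mul _) (hh1.const_mul _), integral_const_mul,
          integral_const_mul, integral_add hg2 hh2]

theorem stmt_6_general {Ω : Type*} [MeasurableSpace Ω] (μ : Measure Ω)
    [IsFiniteMeasure μ]
    (d : ℕ) (γ : ℝ → ℝ) (γmin γmax L : ℝ)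
    (hγbound : ∀ t : ℝ, 0 ≤ t → γmin ≤ γ t ∧ γ t ≤ γmax)
    (hγlim : Tendsto γ atTop (𝓝 L))
    (g : ℕ → Ω → EuclideanSpace ℝ (Fin d)) (M : ℝ)
    (hg : ∀ n, MemLp (g n) 2 μ)
    (hgbound : ∀ n, ∫ x, ‖g n x‖ ^ 2 ∂μ ≤ M)
    (t : ℕ → ℝ) (ht : ∀ n, 0 < t n) (htlim : Tendsto t atTop (𝓝 0))
    (h : Ω → EuclideanSpace ℝ (Fin d)) (hh : MemLp h 2 μ) :
    Tendsto
      (fun n => ∫ x, (γ (‖g n x‖ ^ 2 / (2 * (t n) ^ 2)) - L) * ⟪g n x, h x⟫ ∂μ)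
      atTop (𝓝 0) := by
  set C := max |γmin| |γmax| + |L|
  have hC : ∀ τ, 0 ≤ τ → |γ τ - L| ≤ C := fun τ hτ =>
    (abs_sub _ _).trans (add_le_add_left (abs_le_max_abs_abs (hγbound τ hτ).1 (hγbound τ hτ).2) _)
  refine tendsto_zero_of_forall_norm_le_mul_add ((M + ∫ x, ‖h x‖ ^ 2 ∂μ) / 2) htlim
    fun ε hε => ?_
  obtain ⟨T, hT⟩ := eventually_atTop.1 (hγlim.eventually (Metric.closedBall_mem_nhds L hε))
  refine ⟨C * √(2 * T) * ∫ x, ‖h x‖ ∂μ, Eventually.of_forall fun n => ?_⟩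
  have hn := norm_integral_mul_inner_le (φ := fun τ => γ τ - L) hC (fun τ hτ => hT τ hτ)
    (ht n) (hg n) hh
  exact hn.trans (by linarith [mul_le_mul_of_nonneg_left (hgbound n) hε.le])

/-- Convergence of the quasilinear terms (Appendix Proposition A.1):
`∫ (γ(|g_n|²/(2t_n²)) − γ(∞)) ⟨g_n, h⟩ dμ → 0`. -/
theorem stmt_6 {Ω : Type*} [MeasurableSpace Ω] (μ : Measure Ω)
    [IsFiniteMeasure μ]
    (d : ℕ) (hd : 1 ≤ d) (γ : ℝ → ℝ) (γmin γmax L : ℝ)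
    (hγcont : ContinuousOn γ (Set.Ici (0 : ℝ)))
    (hγmin : 0 < γmin)
    (hγbound : ∀ t : ℝ, 0 ≤ t → γmin ≤ γ t ∧ γ t ≤ γmax)
    (hγlim : Tendsto γ atTop (𝓝 L))
    (g : ℕ → Ω → EuclideanSpace ℝ (Fin d)) (M : ℝ)
    (hg : ∀ n, MemLp (g n) 2 μ)
    (hgbound : ∀ n, ∫ x, ‖g n x‖ ^ 2 ∂μ ≤ M)
    (t : ℕ → ℝ) (ht : ∀ n, 0 < t n) (htlim : Tendsto t atTop (𝓝 0))
    (h : Ω → EuclideanSpace ℝ (Fin d)) (hh : MemLp h 2 μ) :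
    Tendsto
      (fun n => ∫ x, (γ (‖g n x‖ ^ 2 / (2 * (t n) ^ 2)) - L) * ⟪g n x, h x⟫ ∂μ)
      atTop (𝓝 0) :=
  stmt_6_general μ d γ γmin γmax L hγbound hγlim g M hg hgbound t ht htlim h hh
end
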